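/- For distinct γ, ξ ∈ Γ, writing γ − ξ = 4^k·d where d is an integer not divisible by 4, the factor cos(2π(γ−ξ)/4^{k+1}) equals cos(πd/2), and some factor of the infinite product ∏_{j≥1} cos(2π(γ−ξ)/4^j) always vanishes. -/

import Mathlib

open Real

def GammaSet : Set ℕ := {n | ∀ d ∈ Nat.digits 4 n, d ≤ 1}

lemma gamma_mod {n : ℕ} (hn : n ∈ GammaSet) : n % 4 ≤ 1 := by
  rcases Nat.eq_zero_or_pos n with h | h
  · simp [h]
  · exact hn _ (by rw [Nat.digits_def' (by norm_num) h]; exact List.mem_cons_self)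

lemma gamma_div {n : ℕ} (hn : n ∈ GammaSet) : n / 4 ∈ GammaSet := by
  intro d hd
  rcases Nat.eq_zero_or_pos n with h | h
  · simp [h] at hd
  · exact hn d (by rw [Nat.digits_def' (by norm_num) h]; exact List.mem_cons_of_mem _ hd)

lemma gamma_extract : ∀ N γ ξ : ℕ, γ + ξ ≤ N → γ ∈ GammaSet → ξ ∈ GammaSet → γ ≠ ξ →
    ∃ (k : ℕ) (d : ℤ), (γ : ℤ) - ξ = 4 ^ k * d ∧ d % 2 = 1 := by
  intro N
  induction N using Nat.strong_induction_on with
  | _ N ih =>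
    intro γ ξ hle hγ hξ hne
    have ha := gamma_mod hγ
    have hb := gamma_mod hξ
    by_cases hab : γ % 4 = ξ % 4
    · have hγ' := gamma_div hγ
      have hξ' := gamma_div hξ
      have hne' : γ / 4 ≠ ξ / 4 := by intro h; apply hne; omega
      have hN : γ / 4 + ξ / 4 < N := by omega
      obtain ⟨k, d, hd, hodd⟩ := ih _ hN (γ / 4) (ξ / 4) le_rfl hγ' hξ' hne'
      refine ⟨k + 1, d, ?_, hodd⟩
      have e : (γ : ℤ) - ξ = 4 * ((γ / 4 : ℕ) - (ξ / 4 : ℕ) : ℤ) := by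
        push_cast
        omega
      rw [e, hd, pow_succ]
      ring
    · refine ⟨0, (γ : ℤ) - ξ, by ring, by omega⟩

theorem some_factor_vanishes
    {γ ξ : ℕ} (hγ : γ ∈ GammaSet) (hξ : ξ ∈ GammaSet) (hne : γ ≠ ξ) :
    (∃ (k : ℕ) (d : ℤ), (γ : ℤ) - ξ = 4 ^ k * d ∧ ¬ (4 : ℤ) ∣ d ∧
      (d % 4 = 1 ∨ d % 4 = 2 ∨ d % 4 = 3) ∧
      Real.cos (2 * π * ((γ : ℝ) - ξ) / 4 ^ (k + 1)) = Real.cos (π * (d : ℝ) / 2)) ∧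
    ∃ j : ℕ, Real.cos (2 * π * ((γ : ℝ) - ξ) / 4 ^ (j + 1)) = 0 := by
  obtain ⟨k, d, hd, hodd⟩ := gamma_extract (γ + ξ) γ ξ le_rfl hγ hξ hne
  have hR : ((γ : ℝ) - ξ) = 4 ^ k * d := by exact_mod_cast hd
  have harg : 2 * π * ((γ : ℝ) - ξ) / 4 ^ (k + 1) = π * (d : ℝ) / 2 := by
    rw [hR, pow_succ]
    have h4 : ((4 : ℝ) ^ k) ≠ 0 := by positivity
    field_simp
    ring
  have hzero : Real.cos (π * (d : ℝ) / 2) = 0 := by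
    obtain ⟨m, hm⟩ : ∃ m : ℤ, d = 2 * m + 1 := ⟨d / 2, by omega⟩
    rw [Real.cos_eq_zero_iff]
    exact ⟨m, by rw [hm]; push_cast; ring⟩
  refine ⟨⟨k, d, hd, ?_, by omega, by rw [harg]⟩, k, by rw [harg]; exact hzero⟩
  rintro ⟨e, he⟩
  omega
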